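/- arXiv:math/9908146 — 3 statements merged into one kernel-verified Lean document; each statement's English description precedes it below -/
import Mathlib

section
/- For every integer n >= 1 and every real (or complex) number b, the sum over k from 0 to n of (-n)_k (b)_k (b+2k) / (Gamma(b+n+k+1) k!) equals 0. -/
noncomputable def poch (a : ℝ) (k : ℕ) : ℝ := ∏ m ∈ Finset.range k, (a + m)

noncomputable def lag (α : ℝ) (n : ℕ) (x : ℝ) : ℝ :=
  ∑ k ∈ Finset.range (n + 1),
    (-1) ^ k * (poch (α + k + 1) (n - k) / (n - k).factorial) * x ^ k / k.factorial

noncomputable def jacobi (α β : ℝ) (n : ℕ) (x : ℝ) : ℝ :=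
  ∑ k ∈ Finset.range (n + 1),
    poch ((n : ℝ) + α + β + 1) k * poch (α + k + 1) (n - k) /
      (k.factorial * (n - k).factorial) * ((x - 1) / 2) ^ k

noncomputable def charlier (a : ℝ) (n : ℕ) (x : ℝ) : ℝ :=
  ∑ m ∈ Finset.range (n + 1),
    (∏ j ∈ Finset.range m, (x - (j : ℝ))) / m.factorial * (-a) ^ (n - m) / (n - m).factorial

/-!
The sum telescopes. For any `a, b` and `c = b - a`, the `k`-th term multiplied by `a` equals
`G (k + 1) - G k` with `G m = m (a)_m (b)_m / (m! Γ(c + m))`: after the recurrence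
`1 / Γ(c + k) = (c + k) / Γ(c + k + 1)` (valid at the poles too: `Real.Gamma` is `0` there, so
`(Real.Gamma x)⁻¹` is the entire function `1 / Γ`) this is the polynomial identity
`(a + k)(b + k) - k (c + k) = a (b + 2k)`. With `a = -n` the boundary term `G (n + 1)`
contains `(-n)_(n+1) = 0`, and `n ≠ 0` lets us cancel the factor `a`.
-/

lemma Real.inv_Gamma_eq_self_mul_inv_Gamma_add_one (x : ℝ) :
    (Real.Gamma x)⁻¹ = x * (Real.Gamma (x + 1))⁻¹ := by
  rcases eq_or_ne x 0 with rfl | hx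
  · simp [Real.Gamma_zero]
  · rw [Real.Gamma_add_one hx, mul_inv, mul_inv_cancel_left₀ hx]

lemma poch_succ (a : ℝ) (k : ℕ) : poch a (k + 1) = poch a k * (a + k) :=
  Finset.prod_range_succ _ _

lemma poch_neg_natCast_succ (n : ℕ) : poch (-(n : ℝ)) (n + 1) = 0 :=
  Finset.prod_eq_zero (Finset.self_mem_range_succ n) (neg_add_cancel _)

lemma mul_sum_range_poch_mul_poch_mul_inv_Gamma (a b : ℝ) (N : ℕ) :
    a * ∑ k ∈ Finset.range N,
      poch a k * poch b k * (b + 2 * k) * (Real.Gamma (b - a + k + 1))⁻¹ / k.factorial =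
    N * poch a N * poch b N / N.factorial * (Real.Gamma (b - a + N))⁻¹ := by
  rw [Finset.mul_sum]
  refine Finset.sum_range_induction _ (fun m => m * poch a m * poch b m / m.factorial *
    (Real.Gamma (b - a + m))⁻¹) (by simp) N fun k _ => ?_
  rw [Real.inv_Gamma_eq_self_mul_inv_Gamma_add_one (b - a + k), poch_succ, poch_succ,
    Nat.factorial_succ]
  simp only [Nat.cast_succ, Nat.cast_mul, ← add_assoc]
  field_simp
  ring

theorem stmt1 (n : ℕ) (hn : 1 ≤ n) (b : ℝ) :
    ∑ k ∈ Finset.range (n + 1),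
      poch (-(n : ℝ)) k * poch b k * (b + 2 * k) *
        (Real.Gamma (b + n + k + 1))⁻¹ / k.factorial = 0 := by
  have htelescope := mul_sum_range_poch_mul_poch_mul_inv_Gamma (-(n : ℝ)) b (n + 1)
  simp only [poch_neg_natCast_succ, mul_zero, zero_mul, zero_div, sub_neg_eq_add] at htelescope
  have hn0 : (n : ℝ) ≠ 0 := by exact_mod_cast Nat.one_le_iff_ne_zero.mp hn
  exact (mul_eq_zero.mp htelescope).resolve_left (neg_ne_zero.mpr hn0)
end

section
/- The monomial x^n / n! equals the sum over k from 0 to n of (-1)^k binomial(n+alpha, n-k) L_k^{(alpha)}(x), where L_k^{(alpha)} is the classical Laguerre polynomial. -/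
open Finset

/-- `lagCoeff α n k` is the generalized binomial coefficient `binom(n + α, n - k)`. -/
noncomputable def lagCoeff (α : ℝ) (n k : ℕ) : ℝ := poch (α + k + 1) (n - k) / (n - k).factorial

lemma lag_eq_sum_lagCoeff (α : ℝ) (n : ℕ) (x : ℝ) :
    lag α n x = ∑ k ∈ range (n + 1), (-1) ^ k * lagCoeff α n k * (x ^ k / k.factorial) := by
  simp only [lag, lagCoeff, mul_div_assoc]

lemma poch_add (a : ℝ) (p q : ℕ) : poch a (p + q) = poch a p * poch (a + p) q := by
  simp only [poch, prod_range_add, Nat.cast_add, add_assoc]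

lemma lagCoeff_self (α : ℝ) (n : ℕ) : lagCoeff α n n = 1 := by
  simp [lagCoeff, poch]

lemma lagCoeff_mul_lagCoeff (α : ℝ) {j k n : ℕ} (hjk : j ≤ k) (hkn : k ≤ n) :
    lagCoeff α n k * lagCoeff α k j = lagCoeff α n j * (n - j).choose (k - j) := by
  obtain ⟨i, rfl⟩ := Nat.exists_eq_add_of_le hjk
  obtain ⟨l, rfl⟩ := Nat.exists_eq_add_of_le hkn
  have hfact : ((i + l).choose i : ℝ) * i.factorial * l.factorial = (i + l).factorial := by
    exact_mod_cast Nat.choose_symm_add ▸ Nat.add_choose_mul_factorial_mul_factorial i l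
  have hchoose : ((i + l).choose i : ℝ) ≠ 0 := by
    exact_mod_cast (Nat.choose_pos (Nat.le_add_right i l)).ne'
  have hpoch : poch (α + j + 1) (i + l) = poch (α + j + 1) i * poch (α + ↑(j + i) + 1) l := by
    rw [poch_add]; push_cast; ring_nf
  rw [lagCoeff, lagCoeff, lagCoeff, show j + i + l - (j + i) = l by omega,
    show j + i - j = i by omega, show j + i + l - j = i + l by omega, hpoch, ← hfact]
  field_simp

lemma sum_Ico_neg_one_pow_mul_choose {j n : ℕ} (hjn : j ≤ n) :
    ∑ k ∈ Ico j (n + 1), (-1 : ℝ) ^ (k + j) * ((n - j).choose (k - j) : ℝ) =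
      if j = n then 1 else 0 := by
  have hsign (i : ℕ) : (-1 : ℝ) ^ (j + i + j) = (-1) ^ i := by
    rw [show j + i + j = i + 2 * j by omega, pow_add, pow_mul, neg_one_sq, one_pow, mul_one]
  have h := congrArg (Int.cast : ℤ → ℝ) (Int.alternating_sum_range_choose (n := n - j))
  push_cast at h
  rw [sum_Ico_eq_sum_range, show n + 1 - j = n - j + 1 by omega]
  simp only [Nat.add_sub_cancel_left, hsign, h]
  exact if_congr (by omega) rfl rfl

/-- The lower triangular matrix `((-1)^k binom(n + α, n - k))_{n,k}` is an involution. -/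
lemma sum_Ico_lagCoeff_mul_lagCoeff (α : ℝ) {j n : ℕ} (hjn : j ≤ n) :
    ∑ k ∈ Ico j (n + 1), (-1) ^ k * lagCoeff α n k * (-1) ^ j * lagCoeff α k j =
      if j = n then 1 else 0 := by
  calc _ = lagCoeff α n j *
        ∑ k ∈ Ico j (n + 1), (-1 : ℝ) ^ (k + j) * ((n - j).choose (k - j) : ℝ) := by
        rw [mul_sum]
        refine sum_congr rfl fun k hk => ?_
        rw [mem_Ico] at hk
        linear_combination (-1 : ℝ) ^ (k + j) *
          lagCoeff_mul_lagCoeff α hk.1 (Nat.le_of_lt_succ hk.2)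
    _ = _ := by
        rw [sum_Ico_neg_one_pow_mul_choose hjn]
        split_ifs with h
        · rw [h, lagCoeff_self, mul_one]
        · rw [mul_zero]

theorem stmt3 (α x : ℝ) (n : ℕ) :
    x ^ n / n.factorial =
      ∑ k ∈ Finset.range (n + 1),
        (-1) ^ k * (poch (α + k + 1) (n - k) / (n - k).factorial) * lag α k x := by
  change _ = ∑ k ∈ range (n + 1), (-1) ^ k * lagCoeff α n k * lag α k x
  simp_rw [lag_eq_sum_lagCoeff, mul_sum, range_eq_Ico, ← sum_Ico_Ico_comm, ← mul_assoc, ← sum_mul]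
  have hcoeff (j : ℕ) (hj : j ∈ Ico 0 (n + 1)) :
      (∑ k ∈ Ico j (n + 1), (-1) ^ k * lagCoeff α n k * (-1) ^ j * lagCoeff α k j) *
        (x ^ j / j.factorial) = if j = n then x ^ n / n.factorial else 0 := by
    rw [mem_Ico] at hj
    rw [sum_Ico_lagCoeff_mul_lagCoeff α (Nat.le_of_lt_succ hj.2)]
    split_ifs with h
    · rw [h, one_mul]
    · rw [zero_mul]
  rw [sum_congr rfl hcoeff, sum_ite_eq', if_pos (by simp)]
end

section
/- (Laguerre inversion formula) For nonnegative integers j <= i, the sum over k from j to i of L_{i-k}^{(-alpha-i-1)}(-x) L_{k-j}^{(alpha+j)}(x) equals the Kronecker delta delta_{ij}. -/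
/-!
Writing `L_n^(α)(x) = ∑_{k+p=n} (-x)^k/k! · multichoose(α+k+1, p)`, the product of two Laguerre
sums regroups, by Chu–Vandermonde for `multichoose` and the binomial theorem for `(x+y)^c/c!`,
into the addition formula `∑_{r+m=n} L_r^(β)(x) L_m^(γ)(y) = L_n^(β+γ+1)(x+y)`.
With `β = -α-i-1`, `γ = α+j`, `n = i-j` and arguments `-x`, `x` the sum becomes
`L_n^(-n)(0) = multichoose(1-n, n) = (1-n)(2-n)⋯0/n!`, which is `1` for `n = 0` and `0` otherwise.
-/

open Finset

theorem Ring.multichoose_add {R : Type*} [CommRing R] [BinomialRing R] (a b : R) (n : ℕ) :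
    multichoose (a + b) n = ∑ ij ∈ antidiagonal n, multichoose a ij.1 * multichoose b ij.2 := by
  have upper_neg (r : R) (k : ℕ) : multichoose r k = Int.negOnePow k • choose (-r) k := by
    rw [choose_neg', smul_smul, ← Int.negOnePow_add, Int.negOnePow_even _ (by simp), one_smul]
  rw [upper_neg, neg_add, add_choose_eq _ (Commute.all _ _), smul_sum]
  refine sum_congr rfl fun ij hij => ?_
  rw [upper_neg, upper_neg, smul_mul_smul_comm, ← Int.negOnePow_add, ← Nat.cast_add,
    mem_antidiagonal.1 hij]

theorem add_pow_div_factorial {K : Type*} [Field K] [CharZero K] (x y : K) (n : ℕ) :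
    (x + y) ^ n / n.factorial =
      ∑ ij ∈ antidiagonal n, x ^ ij.1 / ij.1.factorial * (y ^ ij.2 / ij.2.factorial) := by
  rw [(Commute.all x y).add_pow', sum_div]
  refine sum_congr rfl fun ij hij => ?_
  obtain rfl := mem_antidiagonal.1 hij
  have : ((ij.1 + ij.2).factorial : K) ≠ 0 := Nat.cast_ne_zero.2 (Nat.factorial_ne_zero _)
  rw [nsmul_eq_mul, Nat.cast_add_choose]
  field_simp

theorem poch_div_factorial (a : ℝ) (k : ℕ) : poch a k / k.factorial = Ring.multichoose a k := by
  have hpoch : poch a k = (ascPochhammer ℝ k).eval a := by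
    induction k with
    | zero => simp [poch]
    | succ k ih => rw [poch, prod_range_succ, ← poch, ih, ascPochhammer_succ_eval]
  rw [div_eq_iff (by positivity), hpoch, ← Polynomial.ascPochhammer_smeval_eq_eval,
    ← Ring.factorial_nsmul_multichoose_eq_ascPochhammer, nsmul_eq_mul, mul_comm]

theorem lag_eq_sum_antidiagonal (α : ℝ) (n : ℕ) (x : ℝ) :
    lag α n x = ∑ kp ∈ antidiagonal n,
      (-x) ^ kp.1 / kp.1.factorial * Ring.multichoose (α + kp.1 + 1) kp.2 := by
  rw [lag, Nat.sum_antidiagonal_eq_sum_range_succ_mk]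
  refine sum_congr rfl fun k _ => ?_
  rw [← poch_div_factorial, neg_pow]
  ring

theorem lag_apply_zero (α : ℝ) (n : ℕ) : lag α n 0 = Ring.multichoose (α + 1) n := by
  rw [lag_eq_sum_antidiagonal, Nat.sum_antidiagonal_eq_sum_range_succ_mk, sum_range_succ',
    sum_eq_zero fun k _ => by simp]
  simp

theorem sum_antidiagonal_mul_sum_antidiagonal {R : Type*} [CommSemiring R]
    (f g : ℕ → ℕ → R) (n : ℕ) :
    ∑ rm ∈ antidiagonal n,
        (∑ ap ∈ antidiagonal rm.1, f ap.1 ap.2) * ∑ bq ∈ antidiagonal rm.2, g bq.1 bq.2 =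
      ∑ cs ∈ antidiagonal n, ∑ ab ∈ antidiagonal cs.1, ∑ pq ∈ antidiagonal cs.2,
        f ab.1 pq.1 * g ab.2 pq.2 := by
  simp_rw [sum_mul_sum, ← sum_product', sum_sigma']
  -- Both sides run over `a + p + b + q = n`; swapping the middle indices matches them.
  let τ : (_ : ℕ × ℕ) × (ℕ × ℕ) × (ℕ × ℕ) → (_ : ℕ × ℕ) × (ℕ × ℕ) × (ℕ × ℕ) :=
    fun ⟨_, (a, p), (b, q)⟩ => ⟨(a + b, p + q), (a, b), (p, q)⟩
  refine sum_nbij' τ τ ?_ ?_ ?_ ?_ ?_ <;>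
    rintro ⟨⟨_, _⟩, ⟨a, p⟩, ⟨b, q⟩⟩ <;>
    simp +contextual [τ] <;>
    omega

theorem lag_add (β γ x y : ℝ) (n : ℕ) :
    ∑ rm ∈ antidiagonal n, lag β rm.1 x * lag γ rm.2 y = lag (β + γ + 1) n (x + y) := by
  simp only [lag_eq_sum_antidiagonal]
  refine (sum_antidiagonal_mul_sum_antidiagonal
    (fun a p => (-x) ^ a / a.factorial * Ring.multichoose (β + a + 1) p)
    (fun b q => (-y) ^ b / b.factorial * Ring.multichoose (γ + b + 1) q) n).trans ?_
  refine sum_congr rfl fun cs _ => ?_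
  rw [neg_add, add_pow_div_factorial, sum_mul]
  refine sum_congr rfl fun ab hab => ?_
  rw [← mem_antidiagonal.1 hab, Nat.cast_add,
    show β + γ + 1 + (ab.1 + ab.2 : ℝ) + 1 = (β + ab.1 + 1) + (γ + ab.2 + 1) by ring,
    Ring.multichoose_add, mul_sum]
  exact sum_congr rfl fun pq _ => by ring

theorem sum_Icc_eq_sum_antidiagonal {M : Type*} [AddCommMonoid M] (f : ℕ → ℕ → M) {i j : ℕ}
    (h : j ≤ i) : ∑ k ∈ Icc j i, f (i - k) (k - j) = ∑ rm ∈ antidiagonal (i - j), f rm.1 rm.2 := by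
  refine sum_nbij' (fun k => (i - k, k - j)) (fun rm => j + rm.2) ?_ ?_ ?_ ?_ ?_ <;>
    intro _ <;> simp [Prod.ext_iff] <;> omega

theorem stmt14 (α x : ℝ) (i j : ℕ) (hij : j ≤ i) :
    ∑ k ∈ Finset.Icc j i, lag (-α - i - 1) (i - k) (-x) * lag (α + j) (k - j) x =
      if i = j then 1 else 0 := by
  rw [sum_Icc_eq_sum_antidiagonal (fun r m => lag (-α - i - 1) r (-x) * lag (α + j) m x) hij,
    lag_add, neg_add_cancel, lag_apply_zero]
  obtain ⟨n, rfl⟩ := Nat.exists_eq_add_of_le hij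
  rcases n with _ | n
  · simp
  · have : -α - ((j + (n + 1) : ℕ) : ℝ) - 1 + (α + j) + 1 + 1 = -n := by push_cast; ring
    rw [add_tsub_cancel_left, this, Ring.multichoose_succ_neg_natCast, if_neg (by omega)]
end
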